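/- arXiv:1701.06606 — 7 statements merged into one kernel-verified Lean document; each statement's English description precedes it below -/
import Mathlib

section
/- Let Q ⊆ R^{p+q} be a polyhedron, let π ∈ Z^p, π0 ∈ Z, and let Q^≤ = Q ∩ {(x,y) : π·x ≤ π0}, Q^≥ = Q ∩ {(x,y) : π·x ≥ π0+1}. If a point (x̄,ȳ) lies in conv(Q^≤ ∪ Q^≥) but in neither Q^≤ nor Q^≥, then (x̄,ȳ) is a convex combination of a point of Q with π·x = π0 and a point of Q with π·x = π0+1. -/
/-- If a point lies in `conv(Q^≤ ∪ Q^≥)` but in neither `Q^≤` nor `Q^≥`,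
then it is a convex combination of a point of `Q` on `π·x = π0` and a point of `Q` on
`π·x = π0 + 1`. -/
theorem stmt_1 {p q : ℕ} (Q : Set ((Fin p → ℝ) × (Fin q → ℝ)))
    (hQpoly : ∃ (n : ℕ) (A : Fin n → ((Fin p → ℝ) × (Fin q → ℝ)) →ₗ[ℝ] ℝ) (b : Fin n → ℝ),
      Q = {z | ∀ i, b i ≤ A i z})
    (π : Fin p → ℤ) (π0 : ℤ)
    (Qle Qge : Set ((Fin p → ℝ) × (Fin q → ℝ)))
    (hle : Qle = Q ∩ {z | ∑ i, (π i : ℝ) * z.1 i ≤ (π0 : ℝ)})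
    (hge : Qge = Q ∩ {z | (π0 : ℝ) + 1 ≤ ∑ i, (π i : ℝ) * z.1 i})
    (w : (Fin p → ℝ) × (Fin q → ℝ))
    (hw : w ∈ convexHull ℝ (Qle ∪ Qge)) (hw1 : w ∉ Qle) (hw2 : w ∉ Qge) :
    ∃ a ∈ Q, ∃ b ∈ Q, ∃ lam : ℝ, 0 ≤ lam ∧ lam ≤ 1 ∧
      (∑ i, (π i : ℝ) * a.1 i) = (π0 : ℝ) ∧
      (∑ i, (π i : ℝ) * b.1 i) = (π0 : ℝ) + 1 ∧
      w = lam • a + (1 - lam) • b := by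
  classical
  -- the linear functional
  set f : ((Fin p → ℝ) × (Fin q → ℝ)) →ₗ[ℝ] ℝ :=
    { toFun := fun z => ∑ i, (π i : ℝ) * z.1 i
      map_add' := by
        intro z z'
        simp [mul_add, Finset.sum_add_distrib]
      map_smul' := by
        intro c z
        simp [Finset.mul_sum, smul_eq_mul]
        exact Finset.sum_congr rfl fun i _ => by ring } with hf
  have hfapp : ∀ z, f z = ∑ i, (π i : ℝ) * z.1 i := fun z => rfl
  -- Q is convex
  obtain ⟨n, A, bb, hQ⟩ := hQpoly
  have hQconv : Convex ℝ Q := by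
    rw [hQ]
    have : {z : (Fin p → ℝ) × (Fin q → ℝ) | ∀ i, bb i ≤ A i z}
        = ⋂ i, {z | bb i ≤ A i z} := by
      ext z; simp
    rw [this]
    exact convex_iInter fun i => convex_halfSpace_ge (A i).isLinear (bb i)
  have hQleconv : Convex ℝ Qle := by
    rw [hle]
    exact hQconv.inter (convex_halfSpace_le f.isLinear _)
  have hQgeconv : Convex ℝ Qge := by
    rw [hge]
    exact hQconv.inter (convex_halfSpace_ge f.isLinear _)
  -- nonemptiness
  rcases Set.eq_empty_or_nonempty Qle with hne | hne
  · rw [hne, Set.empty_union] at hw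
    exact absurd (hQgeconv.convexHull_eq ▸ hw) hw2
  rcases Set.eq_empty_or_nonempty Qge with hne' | hne'
  · rw [hne', Set.union_empty] at hw
    exact absurd (hQleconv.convexHull_eq ▸ hw) hw1
  rw [hQleconv.convexHull_union hQgeconv hne hne', mem_convexJoin] at hw
  obtain ⟨u, hu, v, hv, s, t, hs, ht, hst, hwuv⟩ := hw
  have huQ : u ∈ Q := (hle ▸ hu).1
  have hvQ : v ∈ Q := (hge ▸ hv).1
  have hfu : f u ≤ (π0 : ℝ) := (hle ▸ hu).2
  have hfv : (π0 : ℝ) + 1 ≤ f v := (hge ▸ hv).2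
  have hwQ : w ∈ Q := hwuv ▸ hQconv huQ hvQ hs ht hst
  have hfw1 : (π0 : ℝ) < f w := by
    by_contra h
    exact hw1 (hle ▸ ⟨hwQ, not_lt.1 h⟩)
  have hfw2 : f w < (π0 : ℝ) + 1 := by
    by_contra h
    exact hw2 (hge ▸ ⟨hwQ, not_lt.1 h⟩)
  -- set up the algebra
  set D : ℝ := f v - f u with hD
  have hDpos : 0 < D := by
    have : (1 : ℝ) ≤ D := by simp [hD]; linarith
    linarith
  set ta : ℝ := ((π0 : ℝ) - f u) / D with hta
  set tb : ℝ := ((π0 : ℝ) + 1 - f u) / D with htb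
  have hta0 : 0 ≤ ta := div_nonneg (by linarith) hDpos.le
  have htb1 : tb ≤ 1 := by
    rw [htb, div_le_one hDpos]; simp [hD]; linarith
  have htab : ta < tb := by
    rw [hta, htb, div_lt_div_iff₀ hDpos hDpos]
    nlinarith
  set a : (Fin p → ℝ) × (Fin q → ℝ) := (1 - ta) • u + ta • v with ha
  set b : (Fin p → ℝ) × (Fin q → ℝ) := (1 - tb) • u + tb • v with hb
  have hta1 : ta ≤ 1 := le_trans htab.le htb1
  have htb0 : 0 ≤ tb := le_trans hta0 htab.le
  have haQ : a ∈ Q := hQconv huQ hvQ (by linarith) hta0 (by ring)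
  have hbQ : b ∈ Q := hQconv huQ hvQ (by linarith) htb0 (by ring)
  have hfa : f a = (π0 : ℝ) := by
    rw [ha]
    simp only [map_add, map_smul, smul_eq_mul]
    rw [hta]
    field_simp
    ring
  have hfb : f b = (π0 : ℝ) + 1 := by
    rw [hb]
    simp only [map_add, map_smul, smul_eq_mul]
    rw [htb]
    field_simp
    ring
  -- f w = f u + t * D
  have hfwt : f w = s * f u + t * f v := by
    rw [← hwuv]; simp [map_add, map_smul, smul_eq_mul]
  have hsu : s = 1 - t := by linarith
  have htlt : ta < t := by
    rw [hta, div_lt_iff₀ hDpos]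
    have : f w = f u + t * D := by rw [hfwt, hsu, hD]; ring
    linarith
  have htgt : t < tb := by
    rw [htb, lt_div_iff₀ hDpos]
    have : f w = f u + t * D := by rw [hfwt, hsu, hD]; ring
    linarith
  set lam : ℝ := (tb - t) / (tb - ta) with hlam
  have hden : 0 < tb - ta := by linarith
  have hlam0 : 0 ≤ lam := div_nonneg (by linarith) hden.le
  have hlam1 : lam ≤ 1 := by
    rw [hlam, div_le_one hden]; linarith
  refine ⟨a, haQ, b, hbQ, lam, hlam0, hlam1, hfa, hfb, ?_⟩
  have hcoef : lam * ta + (1 - lam) * tb = t := by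
    rw [hlam]; field_simp; ring
  have hcoef' : lam * (1 - ta) + (1 - lam) * (1 - tb) = s := by
    rw [hsu]; linarith
  have hx : lam • a + (1 - lam) • b
      = (lam * (1 - ta) + (1 - lam) * (1 - tb)) • u + (lam * ta + (1 - lam) * tb) • v := by
    rw [ha, hb]; module
  rw [hx, hcoef, hcoef', hwuv]
end

section
/- Let M0 < M be two real numbers, let Q0 ⊆ R^{m+1} be a polyhedron in variables (x,z) whose height is M, and let Qx ⊆ R^m be a polytope containing the set {x : ∃ z > M0 with (x,z) ∈ Q0} in its relative interior. Then every (x̄, z̄) ∈ Q0 satisfies: if x̄ ∈ relint(Qx) then z̄ ≤ M, and otherwise z̄ ≤ M0 − (d(x̄, Qx)/diam(Qx))·(M − M0). -/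
/-! Take `q ∈ Q0` at height `M` and `p ∈ Q0` at height at most `M0`. By convexity the segment
from `q` to `p` lies in `Q0` and its height decreases linearly, so its projection stays in `Qx`
for all parameters below `t = (M - M0) / (M - p.2)`, hence also at `t` in the closure. The point
`x` reached there satisfies `dist x q.1 = t * dist p.1 q.1 ≤ diam Qx` and
`dist p.1 x = (1 - t) * dist p.1 q.1`, so `infDist p.1 Qx ≤ (1 - t) / t * diam Qx`,
which is the claimed bound. -/

open Metric AffineMap

theorem convex_setOf_forall_le_apply {ι E : Type*} [AddCommGroup E] [Module ℝ E]
    (A : ι → E →ₗ[ℝ] ℝ) (b : ι → ℝ) : Convex ℝ {z | ∀ i, b i ≤ A i z} := by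
  simpa only [Set.ofPred_forall] using
    convex_iInter fun i => convex_halfSpace_ge (A i).isLinear (b i)

section

variable {E : Type*} [NormedAddCommGroup E] [NormedSpace ℝ E]

theorem infDist_mul_le_of_lineMap_mem_closure {S : Set E} (hS : Bornology.IsBounded S) {a b : E}
    (ha : a ∈ S) {t : ℝ} (ht₀ : 0 ≤ t) (ht₁ : t ≤ 1) (hmem : lineMap a b t ∈ closure S) :
    infDist b S * t ≤ (1 - t) * diam S := by
  have hnear : infDist b S ≤ (1 - t) * dist a b := by
    rw [← infDist_closure, ← abs_of_nonneg (sub_nonneg.2 ht₁), ← Real.norm_eq_abs,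
      ← dist_lineMap_right, dist_comm]
    exact infDist_le_dist_of_mem hmem
  have hdiam : t * dist a b ≤ diam S := by
    rw [← abs_of_nonneg ht₀, ← Real.norm_eq_abs, ← dist_lineMap_left, ← diam_closure]
    exact dist_le_diam_of_mem hS.closure hmem (subset_closure ha)
  calc infDist b S * t ≤ (1 - t) * dist a b * t := by gcongr
    _ = (1 - t) * (t * dist a b) := by ring
    _ ≤ (1 - t) * diam S := by gcongr

variable {C : Set (E × ℝ)} {S : Set E} {M₀ : ℝ}

theorem lineMap_fst_mem_closure (hC : Convex ℝ C)
    (hS : ∀ x z, M₀ < z → (x, z) ∈ C → x ∈ S) {p q : E × ℝ} (hp : p ∈ C) (hq : q ∈ C)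
    (hpM₀ : p.2 ≤ M₀) (hqM₀ : M₀ < q.2) :
    lineMap q.1 p.1 ((q.2 - M₀) / (q.2 - p.2)) ∈ closure S := by
  set t := (q.2 - M₀) / (q.2 - p.2)
  have hqp : 0 < q.2 - p.2 := by linarith
  have ht₀ : 0 < t := div_pos (by linarith) hqp
  have ht₁ : t ≤ 1 := (div_le_one hqp).2 (by linarith)
  have hIco : ∀ s ∈ Set.Ico 0 t, lineMap q.1 p.1 s ∈ S := by
    rintro s ⟨hs₀, hst⟩
    have hdrop : s * (q.2 - p.2) < q.2 - M₀ := (lt_div_iff₀ hqp).1 hst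
    have hmem : lineMap q p s ∈ C := hC.lineMap_mem hq hp ⟨hs₀, hst.le.trans ht₁⟩
    have hfst := hS (lineMap q p s).1 (lineMap q p s).2 ?_ hmem
    · rwa [fst_lineMap] at hfst
    · rw [snd_lineMap, lineMap_apply_ring']
      linarith
  have hclosure : lineMap q.1 p.1 t ∈ closure (lineMap q.1 p.1 '' Set.Ico 0 t) :=
    image_closure_subset_closure_image lineMap_continuous
      ⟨t, by rw [closure_Ico ht₀.ne]; exact ⟨ht₀.le, le_rfl⟩, rfl⟩
  exact closure_mono (Set.image_subset_iff.2 hIco) hclosure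

theorem infDist_mul_le_of_convex (hC : Convex ℝ C) (hS : ∀ x z, M₀ < z → (x, z) ∈ C → x ∈ S)
    (hSb : Bornology.IsBounded S) {p q : E × ℝ} (hp : p ∈ C) (hq : q ∈ C)
    (hpM₀ : p.2 ≤ M₀) (hqM₀ : M₀ < q.2) :
    infDist p.1 S * (q.2 - M₀) ≤ (M₀ - p.2) * diam S := by
  set t := (q.2 - M₀) / (q.2 - p.2)
  have hqp : 0 < q.2 - p.2 := by linarith
  have ht₁ : t ≤ 1 := (div_le_one hqp).2 (by linarith)
  have hsplit := infDist_mul_le_of_lineMap_mem_closure hSb (hS _ _ hqM₀ hq)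
    (div_pos (by linarith) hqp).le ht₁ (lineMap_fst_mem_closure hC hS hp hq hpM₀ hqM₀)
  calc infDist p.1 S * (q.2 - M₀) = infDist p.1 S * t * (q.2 - p.2) := by
        rw [mul_assoc, div_mul_cancel₀ _ hqp.ne']
    _ ≤ (1 - t) * diam S * (q.2 - p.2) := by gcongr
    _ = (M₀ - p.2) * diam S := by
        simp only [t]; field_simp; ring

end

theorem stmt_5_general {m : ℕ} (M0 M : ℝ) (hM : M0 < M)
    (Q0 : Set (EuclideanSpace ℝ (Fin m) × ℝ))
    (hQ0poly : ∃ (n : ℕ) (A : Fin n → (EuclideanSpace ℝ (Fin m) × ℝ) →ₗ[ℝ] ℝ)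
      (b : Fin n → ℝ), Q0 = {z | ∀ i, b i ≤ A i z})
    (hub : ∀ p ∈ Q0, p.2 ≤ M) (hach : ∃ p ∈ Q0, p.2 = M)
    (Qx : Set (EuclideanSpace ℝ (Fin m)))
    (V : Finset (EuclideanSpace ℝ (Fin m))) (hQx : Qx = convexHull ℝ (V : Set _))
    (hcontain : {x | ∃ z, M0 < z ∧ (x, z) ∈ Q0} ⊆ intrinsicInterior ℝ Qx) :
    ∀ p ∈ Q0,
      (p.1 ∈ intrinsicInterior ℝ Qx → p.2 ≤ M) ∧
      (p.1 ∉ intrinsicInterior ℝ Qx →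
        p.2 ≤ M0 - (Metric.infDist p.1 Qx / Metric.diam Qx) * (M - M0)) := by
  obtain ⟨n, A, b, hQ0⟩ := hQ0poly
  have hQ0conv : Convex ℝ Q0 := hQ0 ▸ convex_setOf_forall_le_apply A b
  obtain ⟨q, hq, rfl⟩ := hach
  have hS : ∀ x z, M0 < z → (x, z) ∈ Q0 → x ∈ Qx :=
    fun x z hz hxz => intrinsicInterior_subset (hcontain ⟨z, hz, hxz⟩)
  have hQxb : Bornology.IsBounded Qx :=
    hQx ▸ (V.finite_toSet.isCompact_convexHull (𝕜 := ℝ)).isBounded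
  intro p hp
  refine ⟨fun _ => hub p hp, fun hp₁ => ?_⟩
  have hpM0 : p.2 ≤ M0 := not_lt.1 fun h => hp₁ (hcontain ⟨p.2, h, hp⟩)
  have key := infDist_mul_le_of_convex hQ0conv hS hQxb hp hq hpM0 hM
  have hfrac : infDist p.1 Qx / diam Qx * (q.2 - M0) ≤ M0 - p.2 := by
    rw [div_mul_eq_mul_div]
    exact div_le_of_le_mul₀ diam_nonneg (sub_nonneg.2 hpM0) key
  linarith

/-- **Lemma `LEM:QinR`.** If `Q0 ⊆ ℝ^m × ℝ` is a polyhedron of height `M`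
and `Qx` is a polytope (of dimension ≥ 1) containing `{x : ∃ z > M0, (x,z) ∈ Q0}` in its
relative interior, then `Q0 ⊆ R(Qx, M, M0)`. -/
theorem stmt_5 {m : ℕ} (M0 M : ℝ) (hM : M0 < M)
    (Q0 : Set (EuclideanSpace ℝ (Fin m) × ℝ))
    (hQ0poly : ∃ (n : ℕ) (A : Fin n → (EuclideanSpace ℝ (Fin m) × ℝ) →ₗ[ℝ] ℝ)
      (b : Fin n → ℝ), Q0 = {z | ∀ i, b i ≤ A i z})
    (hub : ∀ p ∈ Q0, p.2 ≤ M) (hach : ∃ p ∈ Q0, p.2 = M)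
    (Qx : Set (EuclideanSpace ℝ (Fin m)))
    (V : Finset (EuclideanSpace ℝ (Fin m))) (hQx : Qx = convexHull ℝ (V : Set _))
    (hdim : ∃ a ∈ Qx, ∃ b ∈ Qx, a ≠ b)
    (hcontain : {x | ∃ z, M0 < z ∧ (x, z) ∈ Q0} ⊆ intrinsicInterior ℝ Qx) :
    ∀ p ∈ Q0,
      (p.1 ∈ intrinsicInterior ℝ Qx → p.2 ≤ M) ∧
      (p.1 ∉ intrinsicInterior ℝ Qx →
        p.2 ≤ M0 - (Metric.infDist p.1 Qx / Metric.diam Qx) * (M - M0)) :=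
  stmt_5_general M0 M hM Q0 hQ0poly hub hach Qx V hQx hcontain
end

section
/- Let L and L' be two polytopes of the same dimension with L ⊆ L' and conv(L ∩ Z^m) = conv(L' ∩ Z^m). If L' has the 2-hyperplane property, then so does L. -/
/-- A point of `ℝ^m` with all coordinates integers. -/
def IsIntegerPoint {m : ℕ} (x : Fin m → ℝ) : Prop := ∀ i, ∃ n : ℤ, x i = (n : ℝ)

/-- A set `S ⊆ ℝ^m` is 2-partitionable if `|S| ≤ 1`, or `S` can be partitioned into
nonempty sets `S1`, `S2` lying respectively on the two boundary hyperplanes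
`π·x = π0` and `π·x = π0 + 1` of some split. -/
def TwoPartitionable {m : ℕ} (S : Set (Fin m → ℝ)) : Prop :=
  S.Subsingleton ∨ ∃ (π : Fin m → ℤ) (π0 : ℤ) (S1 S2 : Set (Fin m → ℝ)),
    S1.Nonempty ∧ S2.Nonempty ∧ S1 ∪ S2 = S ∧ Disjoint S1 S2 ∧
    (∀ x ∈ S1, ∑ i, (π i : ℝ) * x i = (π0 : ℝ)) ∧
    (∀ x ∈ S2, ∑ i, (π i : ℝ) * x i = (π0 : ℝ) + 1)

/-- `L_I`: the convex hull of the integer points of `L`. -/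
noncomputable def intHull {m : ℕ} (L : Set (Fin m → ℝ)) : Set (Fin m → ℝ) :=
  convexHull ℝ {x ∈ L | IsIntegerPoint x}

/-- `F` is a facet of `L`: a proper exposed face of dimension `dim L − 1`. -/
def IsFacetOf {m : ℕ} (L F : Set (Fin m → ℝ)) : Prop :=
  IsExposed ℝ L F ∧ F ≠ L ∧
    Module.finrank ℝ (affineSpan ℝ F).direction + 1 =
      Module.finrank ℝ (affineSpan ℝ L).direction

/-- `L` has the 2-hyperplane property: every face of `L_I` not contained in a facet of `L`
is 2-partitionable (i.e. its set of integer points is). -/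
def TwoHyperplaneProperty {m : ℕ} (L : Set (Fin m → ℝ)) : Prop :=
  ∀ F, IsExposed ℝ (intHull L) F → (¬ ∃ G, IsFacetOf L G ∧ F ⊆ G) →
    TwoPartitionable {x ∈ F | IsIntegerPoint x}

/-! Since `L_I = L'_I`, a face `F` of `L_I` is a face of `L'_I`, so it suffices to show that if
`F` lies in a facet `G'` of `L'` then it lies in a facet of `L`. Now `G' ∩ L` is a nonempty
exposed face of `L`, proper because `L` has the dimension of `L'`, and every proper face of a
polytope lies in a facet: tilting the supporting functional about the face until it picks up a
new vertex keeps the face proper and enlarges it, until its dimension is one less than that of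
the polytope. -/

open Module Finset

theorem IsExposed.inter_of_subset {𝕜 E : Type*} [TopologicalSpace 𝕜] [Semiring 𝕜] [Preorder 𝕜]
    [AddCommMonoid E] [TopologicalSpace E] [Module 𝕜 E] {A B C : Set E}
    (hB : IsExposed 𝕜 A B) (hCA : C ⊆ A) : IsExposed 𝕜 C (B ∩ C) := by
  rintro ⟨w, hwB, hwC⟩
  obtain ⟨l, rfl⟩ := hB ⟨w, hwB⟩
  exact ⟨l, Set.Subset.antisymm (fun x hx => ⟨hx.2, fun y hy => hx.1.2 y (hCA hy)⟩)
    fun x hx => ⟨⟨hCA hx.1, fun y hy => (hwB.2 y hy).trans (hx.2 w hwC)⟩, hx.1⟩⟩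

theorem Finset.exists_pos_forall_add_mul_nonpos {ι : Type*} (s : Finset ι) (a b : ι → ℝ)
    (ha : ∀ i ∈ s, a i ≤ 0) (hab : ∀ i ∈ s, a i = 0 → b i = 0) (hb : ∃ i ∈ s, 0 < b i) :
    ∃ t > 0, (∀ i ∈ s, a i + t * b i ≤ 0) ∧ ∃ i ∈ s, a i < 0 ∧ a i + t * b i = 0 := by
  classical
  have hT : (s.filter (0 < b ·)).Nonempty := by
    obtain ⟨i, hi, hbi⟩ := hb
    exact ⟨i, mem_filter.2 ⟨hi, hbi⟩⟩
  obtain ⟨j, hjT, hj⟩ := (s.filter (0 < b ·)).exists_min_image (fun i => -a i / b i) hT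
  obtain ⟨hjs, hbj⟩ := mem_filter.1 hjT
  have haj : a j < 0 := (ha j hjs).lt_of_ne fun h => hbj.ne' (hab j hjs h)
  have ht : 0 < -a j / b j := div_pos (neg_pos.2 haj) hbj
  refine ⟨-a j / b j, ht, fun i hi => ?_, j, hjs, haj, by field_simp; ring⟩
  rcases le_or_gt (b i) 0 with hbi | hbi
  · nlinarith [ha i hi]
  · have := (le_div_iff₀ hbi).1 (hj i (mem_filter.2 ⟨hi, hbi⟩))
    linarith

theorem Finset.exists_ne_zero_forall_add_mul_nonpos {ι : Type*} (s : Finset ι) (a b : ι → ℝ)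
    (ha : ∀ i ∈ s, a i ≤ 0) (hab : ∀ i ∈ s, a i = 0 → b i = 0) (hb : ∃ i ∈ s, b i ≠ 0) :
    ∃ t ≠ 0, (∀ i ∈ s, a i + t * b i ≤ 0) ∧ ∃ i ∈ s, a i < 0 ∧ a i + t * b i = 0 := by
  by_cases hpos : ∃ i ∈ s, 0 < b i
  · obtain ⟨t, ht, h⟩ := s.exists_pos_forall_add_mul_nonpos a b ha hab hpos
    exact ⟨t, ht.ne', h⟩
  · push Not at hpos
    obtain ⟨i, hi, hbi⟩ := hb
    obtain ⟨t, ht, hle, heq⟩ := s.exists_pos_forall_add_mul_nonpos a (-b) ha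
      (fun i hi h => by simp [hab i hi h]) ⟨i, hi, by simpa using (hpos i hi).lt_of_ne hbi⟩
    refine ⟨-t, neg_ne_zero.2 ht.ne', fun i hi => by simpa using hle i hi, ?_⟩
    simpa using heq

theorem vectorSpan_le_ker_of_forall_eq {k V W : Type*} [Ring k] [AddCommGroup V] [Module k V]
    [AddCommGroup W] [Module k W] {s : Set V} {f : V →ₗ[k] W} {c : W} (h : ∀ x ∈ s, f x = c) :
    vectorSpan k s ≤ LinearMap.ker f := by
  rw [vectorSpan_def, Submodule.span_le]
  rintro _ ⟨x, hx, y, hy, rfl⟩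
  simp [h x hx, h y hy]

theorem Submodule.finrank_le_finrank_inf_ker_add_one {K V : Type*} [Field K] [AddCommGroup V]
    [Module K V] [FiniteDimensional K V] (W : Submodule K V) (f : Dual K V) :
    finrank K W ≤ finrank K ↥(W ⊓ LinearMap.ker f) + 1 := by
  have hsup := Submodule.finrank_sup_add_finrank_inf_eq W (LinearMap.ker f)
  have hle := Submodule.finrank_le (W ⊔ LinearMap.ker f)
  have hker : finrank K V ≤ finrank K (LinearMap.ker f) + 1 := by
    rcases eq_or_ne f 0 with rfl | hf
    · rw [LinearMap.ker_zero, finrank_top]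
      omega
    · exact (Dual.finrank_ker_add_one_of_ne_zero hf).ge
  omega

theorem exists_dual_of_finrank_add_one_lt {K V : Type*} [Field K] [AddCommGroup V] [Module K V]
    [FiniteDimensional K V] {U W : Submodule K V} (f : Dual K V)
    (hdim : finrank K U + 1 < finrank K W) :
    ∃ g : Dual K V, (∀ u ∈ U, g u = 0) ∧ ∃ w ∈ W, f w = 0 ∧ g w ≠ 0 := by
  obtain ⟨w, ⟨hwW, hwf⟩, hwU⟩ : ∃ w ∈ W ⊓ LinearMap.ker f, w ∉ U := by
    by_contra! h
    have := Submodule.finrank_mono (show W ⊓ LinearMap.ker f ≤ U from h)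
    have := W.finrank_le_finrank_inf_ker_add_one f
    omega
  obtain ⟨g, hgw, hgU⟩ := U.exists_dual_map_eq_bot_of_notMem hwU inferInstance
  exact ⟨g, fun u hu => (Submodule.mem_bot K).1 (hgU ▸ Submodule.mem_map_of_mem hu), w, hwW,
    hwf, hgw⟩

section VectorSpace

variable {E : Type*} [AddCommGroup E] [Module ℝ E] [FiniteDimensional ℝ E]

theorem finrank_vectorSpan_filter_lt (V : Finset E) (l : Dual ℝ E)
    {c : ℝ} (hex : ∃ v ∈ V, l v = c) (hne : ∃ v ∈ V, l v ≠ c) :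
    finrank ℝ (vectorSpan ℝ (V.filter (l · = c) : Set E)) <
      finrank ℝ (vectorSpan ℝ (V : Set E)) := by
  obtain ⟨v0, hv0, hlv0⟩ := hex
  obtain ⟨v1, hv1, hlv1⟩ := hne
  refine Submodule.finrank_lt_finrank_of_lt
    (lt_of_le_of_ne (vectorSpan_mono ℝ (coe_subset.2 (filter_subset _ V))) fun h => hlv1 ?_)
  have hmem : v1 -ᵥ v0 ∈ vectorSpan ℝ (V.filter (l · = c) : Set E) :=
    h ▸ vsub_mem_vectorSpan ℝ (mem_coe.2 hv1) (mem_coe.2 hv0)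
  have := vectorSpan_le_ker_of_forall_eq (f := l) (c := c)
    (fun v hv => (mem_filter.1 (mem_coe.1 hv)).2) hmem
  simpa [hlv0, sub_eq_zero] using this

/-- Tilt `l` by a functional `g` that is constant on the face but not on `V`: the tilted
functional still supports the old face, picks up a new vertex, and stays nonconstant on `V` since
it does not vanish at some `w ∈ vectorSpan V` with `l w = 0`. -/
theorem exists_filter_ssubset_of_finrank_add_one_lt (V : Finset E)
    (l : Dual ℝ E) (c : ℝ) (hle : ∀ v ∈ V, l v ≤ c) (hex : ∃ v ∈ V, l v = c)
    (hdim : finrank ℝ (vectorSpan ℝ (V.filter (l · = c) : Set E)) + 1 <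
      finrank ℝ (vectorSpan ℝ (V : Set E))) :
    ∃ (l' : Dual ℝ E) (c' : ℝ), (∀ v ∈ V, l' v ≤ c') ∧
      V.filter (l · = c) ⊂ V.filter (l' · = c') ∧ ∃ v ∈ V, l' v < c' := by
  obtain ⟨u0, hu0, hlu0⟩ := hex
  obtain ⟨g, hgU, w, hwW, hlw, hgw⟩ := exists_dual_of_finrank_add_one_lt l hdim
  have hgV0 : ∀ v ∈ V, l v - c = 0 → g v - g u0 = 0 := fun v hv hlv => by
    simpa using hgU _ (vsub_mem_vectorSpan ℝ (mem_filter.2 ⟨hv, sub_eq_zero.1 hlv⟩)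
      (mem_filter.2 ⟨hu0, hlu0⟩))
  have hgV : ∃ v ∈ V, g v - g u0 ≠ 0 := by
    by_contra! h
    exact hgw (vectorSpan_le_ker_of_forall_eq (c := g u0) (fun v hv => sub_eq_zero.1 (h v hv)) hwW)
  obtain ⟨t, ht, hle', v1, hv1, hlv1, hv1eq⟩ := V.exists_ne_zero_forall_add_mul_nonpos
    (fun v => l v - c) (fun v => g v - g u0) (fun v hv => sub_nonpos.2 (hle v hv)) hgV0 hgV
  have happly : ∀ v, (l + t • g) v = l v + t * g v := fun _ => rfl
  have hle'' : ∀ v ∈ V, (l + t • g) v ≤ c + t * g u0 := fun v hv => by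
    linarith [hle' v hv, happly v]
  refine ⟨l + t • g, c + t * g u0, hle'', ?_, ?_⟩
  · have hsub : V.filter (l · = c) ⊆ V.filter ((l + t • g) · = c + t * g u0) := by
      intro v hv
      obtain ⟨hv, hlv⟩ := mem_filter.1 hv
      have := hgV0 v hv (sub_eq_zero.2 hlv)
      exact mem_filter.2 ⟨hv, by rw [happly, hlv, sub_eq_zero.1 this]⟩
    refine (ssubset_iff_of_subset hsub).2 ⟨v1, mem_filter.2 ⟨hv1, by linarith [happly v1]⟩,
      fun h => ?_⟩
    linarith [(mem_filter.1 h).2]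
  · by_contra! h
    have := vectorSpan_le_ker_of_forall_eq (c := c + t * g u0)
      (fun v hv => (hle'' v hv).antisymm (h v hv)) hwW
    simp [happly, hlw, ht, hgw] at this

end VectorSpace

section TopologicalVectorSpace

variable {E : Type*} [AddCommGroup E] [Module ℝ E] [TopologicalSpace E] [T2Space E]
  [IsTopologicalAddGroup E] [ContinuousSMul ℝ E] [LocallyConvexSpace ℝ E]

/-- Krein–Milman applied to the face: its extreme points are vertices of the polytope. -/
theorem IsExposed.eq_convexHull_inter {V G : Set E} (hV : V.Finite)
    (hG : IsExposed ℝ (convexHull ℝ V) G) : G = convexHull ℝ (V ∩ G) := by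
  have hGconv := hG.convex (convex_convexHull ℝ V)
  refine Set.Subset.antisymm ?_ (convexHull_min Set.inter_subset_right hGconv)
  calc G = closure (convexHull ℝ (G.extremePoints ℝ)) :=
        (closure_convexHull_extremePoints (hG.isCompact (hV.isCompact_convexHull ℝ)) hGconv).symm
    _ ⊆ closure (convexHull ℝ (V ∩ G)) := closure_mono <| convexHull_mono fun x hx =>
        ⟨extremePoints_convexHull_subset (hG.isExtreme.extremePoints_subset_extremePoints hx),
          hx.1⟩
    _ = convexHull ℝ (V ∩ G) := ((hV.inter_of_left G).isCompact_convexHull ℝ).isClosed.closure_eq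

theorem convexHull_filter_eq_exposed [FiniteDimensional ℝ E] (V : Finset E) (l : Dual ℝ E)
    {c : ℝ} (hle : ∀ v ∈ V, l v ≤ c) (hex : ∃ v ∈ V, l v = c) :
    convexHull ℝ (V.filter (l · = c) : Set E) =
      {x ∈ convexHull ℝ (V : Set E) | ∀ y ∈ convexHull ℝ (V : Set E), l y ≤ l x} := by
  obtain ⟨v0, hv0, hlv0⟩ := hex
  have hhull : ∀ y ∈ convexHull ℝ (V : Set E), l y ≤ c := fun y hy =>
    convexHull_min hle (convex_halfSpace_le l.isLinear c) hy
  have hexp : IsExposed ℝ (convexHull ℝ (V : Set E))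
      {x ∈ convexHull ℝ (V : Set E) | ∀ y ∈ convexHull ℝ (V : Set E), l y ≤ l x} :=
    ContinuousLinearMap.toExposed.isExposed (l := LinearMap.toContinuousLinearMap l)
  conv_rhs => rw [hexp.eq_convexHull_inter V.finite_toSet]
  congr 1
  ext v
  simp only [coe_filter, Set.mem_ofPred_eq, Set.mem_inter_iff, mem_coe]
  refine and_congr_right fun hv => ⟨fun hlv => ⟨subset_convexHull ℝ _ hv, fun y hy => ?_⟩,
    fun h => le_antisymm (hle v hv) ?_⟩
  · exact hlv ▸ hhull y hy
  · exact hlv0 ▸ h.2 v0 (subset_convexHull ℝ _ hv0)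

end TopologicalVectorSpace

section Facets

variable {m : ℕ}

theorem isFacetOf_convexHull_filter (V : Finset (Fin m → ℝ)) (l : Dual ℝ (Fin m → ℝ))
    {c : ℝ} (hle : ∀ v ∈ V, l v ≤ c) (hex : ∃ v ∈ V, l v = c) (hlt : ∃ v ∈ V, l v < c)
    (hdim : finrank ℝ (vectorSpan ℝ (V.filter (l · = c) : Set (Fin m → ℝ))) + 1 =
      finrank ℝ (vectorSpan ℝ (V : Set (Fin m → ℝ)))) :
    IsFacetOf (convexHull ℝ (V : Set (Fin m → ℝ)))
      (convexHull ℝ (V.filter (l · = c) : Set (Fin m → ℝ))) := by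
  have hface := convexHull_filter_eq_exposed V l hle hex
  refine ⟨fun _ => ⟨LinearMap.toContinuousLinearMap l, hface⟩, fun h => ?_, ?_⟩
  · obtain ⟨v, hv, hlv⟩ := hlt
    obtain ⟨v0, hv0, hlv0⟩ := hex
    have hvF : v ∈ convexHull ℝ (V.filter (l · = c) : Set (Fin m → ℝ)) :=
      h ▸ subset_convexHull ℝ _ hv
    rw [hface] at hvF
    linarith [hvF.2 v0 (subset_convexHull ℝ _ hv0)]
  · rwa [affineSpan_convexHull, affineSpan_convexHull, direction_affineSpan,
      direction_affineSpan]

theorem exists_isFacetOf_superset_convexHull_filter (V : Finset (Fin m → ℝ))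
    (l : Dual ℝ (Fin m → ℝ)) (c : ℝ) (hle : ∀ v ∈ V, l v ≤ c) (hex : ∃ v ∈ V, l v = c)
    (hlt : ∃ v ∈ V, l v < c) :
    ∃ H, IsFacetOf (convexHull ℝ (V : Set (Fin m → ℝ))) H ∧
      convexHull ℝ (V.filter (l · = c) : Set (Fin m → ℝ)) ⊆ H := by
  by_cases hdim : finrank ℝ (vectorSpan ℝ (V.filter (l · = c) : Set (Fin m → ℝ))) + 1 =
      finrank ℝ (vectorSpan ℝ (V : Set (Fin m → ℝ)))
  · exact ⟨_, isFacetOf_convexHull_filter V l hle hex hlt hdim, subset_rfl⟩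
  have hrank := finrank_vectorSpan_filter_lt V l hex (hlt.imp fun v hv => ⟨hv.1, hv.2.ne⟩)
  obtain ⟨l', c', hle', hss, hlt'⟩ :=
    exists_filter_ssubset_of_finrank_add_one_lt V l c hle hex (lt_of_le_of_ne hrank hdim)
  obtain ⟨v, hv⟩ := hex
  obtain ⟨H, hH, hsub⟩ := exists_isFacetOf_superset_convexHull_filter V l' c' hle'
    ⟨v, mem_filter.1 (hss.subset (mem_filter.2 hv))⟩ hlt'
  exact ⟨H, hH, (convexHull_mono (coe_subset.2 hss.subset)).trans hsub⟩
termination_by #V - #(V.filter (l · = c))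
decreasing_by
  have := card_lt_card hss
  have := card_filter_le V (l' · = c')
  omega

theorem IsExposed.exists_isFacetOf_superset {V : Finset (Fin m → ℝ)} {G : Set (Fin m → ℝ)}
    (hG : IsExposed ℝ (convexHull ℝ (V : Set (Fin m → ℝ))) G) (hne : G.Nonempty)
    (hGP : G ≠ convexHull ℝ (V : Set (Fin m → ℝ))) :
    ∃ H, IsFacetOf (convexHull ℝ (V : Set (Fin m → ℝ))) H ∧ G ⊆ H := by
  obtain ⟨l, rfl⟩ := hG hne
  have hV : V.Nonempty := by
    obtain ⟨x, hx, -⟩ := hne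
    exact coe_nonempty.1 (convexHull_nonempty_iff.1 ⟨x, hx⟩)
  obtain ⟨v0, hv0, hmax⟩ := V.exists_max_image l hV
  have hface := convexHull_filter_eq_exposed V (l : Dual ℝ (Fin m → ℝ)) hmax ⟨v0, hv0, rfl⟩
  simp only [ContinuousLinearMap.coe_coe] at hface
  rw [← hface] at hGP ⊢
  have hlt : ∃ v ∈ V, l v < l v0 := by
    by_contra! h
    exact hGP (by rw [filter_true_of_mem fun v hv => le_antisymm (hmax v hv) (h v hv)])
  exact exists_isFacetOf_superset_convexHull_filter V l (l v0) hmax ⟨v0, hv0, rfl⟩ hlt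

theorem exists_isFacetOf_superset_inter {L L' G' : Set (Fin m → ℝ)} {V : Finset (Fin m → ℝ)}
    (hL : L = convexHull ℝ (V : Set (Fin m → ℝ))) (hsub : L ⊆ L')
    (hdim : finrank ℝ (affineSpan ℝ L).direction = finrank ℝ (affineSpan ℝ L').direction)
    (hG' : IsFacetOf L' G') (hne : (G' ∩ L).Nonempty) :
    ∃ G, IsFacetOf L G ∧ G' ∩ L ⊆ G := by
  subst hL
  refine (hG'.1.inter_of_subset hsub).exists_isFacetOf_superset hne fun h => ?_
  have hLG' : convexHull ℝ (V : Set (Fin m → ℝ)) ⊆ G' := h ▸ Set.inter_subset_left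
  have := Submodule.finrank_mono (AffineSubspace.direction_le (affineSpan_mono ℝ hLG'))
  have := hG'.2.2
  omega

end Facets

theorem stmt_7_general {m : ℕ} (L L' : Set (Fin m → ℝ))
    (VL : Finset (Fin m → ℝ))
    (hL : L = convexHull ℝ (VL : Set _))
    (hdim : Module.finrank ℝ (affineSpan ℝ L).direction =
      Module.finrank ℝ (affineSpan ℝ L').direction)
    (hsub : L ⊆ L') (hI : intHull L = intHull L')
    (h2 : TwoHyperplaneProperty L') : TwoHyperplaneProperty L := by
  intro F hF hF_facet
  rcases F.eq_empty_or_nonempty with rfl | hFne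
  · exact Or.inl (Set.subsingleton_empty.anti fun x hx => hx.1)
  refine h2 F (hI ▸ hF) fun ⟨G', hG', hFG'⟩ => hF_facet ?_
  have hFL : F ⊆ L := hF.subset.trans
    (convexHull_min (Set.sep_subset _ _) (hL ▸ convex_convexHull ℝ _))
  obtain ⟨G, hG, hG'G⟩ := exists_isFacetOf_superset_inter hL hsub hdim hG'
    (hFne.mono (Set.subset_inter hFG' hFL))
  exact ⟨G, hG, (Set.subset_inter hFG' hFL).trans hG'G⟩

/-- **Observation `OBS:2-hyperplane`.** If `L ⊆ L'` are polytopes of the same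
dimension with `conv(L ∩ ℤ^m) = conv(L' ∩ ℤ^m)` and `L'` has the 2-hyperplane property,
then so does `L`. -/
theorem stmt_7 {m : ℕ} (L L' : Set (Fin m → ℝ))
    (VL VL' : Finset (Fin m → ℝ))
    (hL : L = convexHull ℝ (VL : Set _)) (hL' : L' = convexHull ℝ (VL' : Set _))
    (hdim : Module.finrank ℝ (affineSpan ℝ L).direction =
      Module.finrank ℝ (affineSpan ℝ L').direction)
    (hsub : L ⊆ L') (hI : intHull L = intHull L')
    (h2 : TwoHyperplaneProperty L') : TwoHyperplaneProperty L :=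
  stmt_7_general L L' VL hL hdim hsub hI h2
end

section
/- Let L = {x ∈ R^m : Ax ≤ b} be a full-dimensional rational polytope (A integral, b integral) and suppose a1·x ≤ b1 defines a facet of L whose affine hull {x : a1·x = b1} contains no integer point. Then there exists a rational inequality a'·x ≤ b' such that the polytope L̃ obtained from L by replacing a1·x ≤ b1 with a'·x ≤ b' satisfies: L ⊆ L̃, L̃ ∩ Z^m = L ∩ Z^m, and the hyperplane {x : a'·x = b'} contains an integer point. -/
lemma gcd_rep_aux {m : ℕ} (v : Fin m → ℤ) (s : Finset (Fin m)) :
    ∃ y : Fin m → ℤ, ∑ j ∈ s, v j * y j = s.gcd v := by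
  classical
  induction s using Finset.induction_on with
  | empty => exact ⟨0, by simp⟩
  | @insert a s ha ih =>
    obtain ⟨y, hy⟩ := ih
    refine ⟨fun j => if j = a then Int.gcdA (v a) (s.gcd v) else Int.gcdB (v a) (s.gcd v) * y j, ?_⟩
    rw [Finset.sum_insert ha, Finset.gcd_insert]
    have h2 : ∀ j ∈ s, v j * (if j = a then Int.gcdA (v a) (s.gcd v) else Int.gcdB (v a) (s.gcd v) * y j)
        = Int.gcdB (v a) (s.gcd v) * (v j * y j) := by
      intro j hj
      have : j ≠ a := by rintro rfl; exact ha hj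
      rw [if_neg this]; ring
    rw [Finset.sum_congr rfl h2, ← Finset.mul_sum, hy]
    simp only [eq_self_iff_true, if_true]
    have hb := Int.gcd_eq_gcd_ab (v a) (s.gcd v)
    have hc : (Int.gcd (v a) (s.gcd v) : ℤ) = GCDMonoid.gcd (v a) (s.gcd v) := Int.coe_gcd _ _
    rw [← hc, hb]; ring

lemma bezout_rep {m : ℕ} (v : Fin m → ℤ) (t : ℤ) (h : Finset.gcd Finset.univ v ∣ t) :
    ∃ y : Fin m → ℤ, ∑ j, v j * y j = t := by
  obtain ⟨y, hy⟩ := gcd_rep_aux v Finset.univ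
  obtain ⟨s, rfl⟩ := h
  exact ⟨fun j => y j * s, by rw [← hy, Finset.sum_mul]; exact Finset.sum_congr rfl fun j _ => by ring⟩

/-- **Lemma `LEM:rotation`.** Let `L = {x : Ax ≤ b}` be a full-dimensional
rational polytope (`A`, `b` integral) and suppose the row `i0` inequality defines a facet
of `L` whose affine hull contains no integer point. Then one can replace that inequality
by a rational inequality `a'·x ≤ b'` so that the resulting polytope `L̃` contains `L`,
has the same integer points as `L`, and the hyperplane `a'·x = b'` contains an integer
point. -/
theorem stmt_9 {m n : ℕ} (hm : 2 ≤ m) (A : Fin n → Fin m → ℤ) (b : Fin n → ℤ)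
    (i0 : Fin n)
    (L : Set (Fin m → ℝ))
    (hL : L = {x | ∀ i, ∑ j, (A i j : ℝ) * x j ≤ (b i : ℝ)})
    (hbdd : Bornology.IsBounded L) (hfull : (interior L).Nonempty)
    (hfacet : Module.finrank ℝ
        (affineSpan ℝ (L ∩ {x | ∑ j, (A i0 j : ℝ) * x j = (b i0 : ℝ)})).direction
      = m - 1)
    (hnoint : ¬ ∃ y : Fin m → ℤ, ∑ j, A i0 j * y j = b i0) :
    ∃ (a' : Fin m → ℚ) (b' : ℚ) (Lt : Set (Fin m → ℝ)),
      Lt = {x | (∀ i, i ≠ i0 → ∑ j, (A i j : ℝ) * x j ≤ (b i : ℝ)) ∧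
        ∑ j, (a' j : ℝ) * x j ≤ (b' : ℝ)} ∧
      L ⊆ Lt ∧
      Lt ∩ {x | ∀ j, ∃ z : ℤ, x j = (z : ℝ)} = L ∩ {x | ∀ j, ∃ z : ℤ, x j = (z : ℝ)} ∧
      (∃ y : Fin m → ℤ, ∑ j, a' j * (y j : ℚ) = b') := by
  classical
  obtain ⟨x₀, hx₀i⟩ := hfull
  have hx₀ : x₀ ∈ L := interior_subset hx₀i
  by_cases hA0 : ∀ j, A i0 j = 0
  · -- degenerate case: the row i0 is zero; then b i0 > 0 and the constraint is vacuous
    have hb0 : 0 < b i0 := by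
      rcases lt_trichotomy (b i0) 0 with h | h | h
      · exfalso
        have hx := hx₀; rw [hL] at hx
        have h1 := hx i0
        have h2 : ∑ j, (A i0 j : ℝ) * x₀ j = 0 := by
          apply Finset.sum_eq_zero; intro j _; rw [hA0 j]; simp
        rw [h2] at h1
        have : (b i0 : ℝ) < 0 := by exact_mod_cast h
        linarith
      · exact absurd ⟨0, by simp [hA0, h]⟩ hnoint
      · exact h
    refine ⟨0, 0, _, rfl, ?_, ?_, ⟨0, by simp⟩⟩
    · intro x hx
      rw [hL] at hx
      exact ⟨fun i _ => hx i, by simp⟩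
    · ext x
      simp only [Set.mem_inter_iff, Set.mem_setOf_eq]
      constructor
      · rintro ⟨⟨h1, _⟩, h3⟩
        refine ⟨?_, h3⟩
        rw [hL]
        intro i
        by_cases hi : i = i0
        · rw [hi]
          have h2 : ∑ j, (A i0 j : ℝ) * x j = 0 := by
            apply Finset.sum_eq_zero; intro j _; rw [hA0 j]; simp
          rw [h2]
          exact_mod_cast hb0.le
        · exact h1 i hi
      · rintro ⟨h1, h3⟩
        rw [hL] at h1
        exact ⟨⟨fun i _ => h1 i, by simp⟩, h3⟩
  -- main case
  push_neg at hA0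
  obtain ⟨p, hp⟩ := hA0
  obtain ⟨C0, hC0⟩ := isBounded_iff_forall_norm_le.mp hbdd
  -- find a row not parallel to row i0
  have hex : ∃ k j₁ j₂, A i0 j₁ * A k j₂ - A i0 j₂ * A k j₁ ≠ 0 := by
    by_contra hcon
    push_neg at hcon
    have hnt : Nontrivial (Fin m) := Fin.nontrivial_iff_two_le.mpr hm
    obtain ⟨q, hq⟩ := exists_ne p
    set d : Fin m → ℝ := fun j => if j = q then (A i0 p : ℝ) else if j = p then -(A i0 q : ℝ) else 0 with hd
    have hsum : ∀ w : Fin m → ℝ,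
        ∑ j, w j * d j = w q * (A i0 p : ℝ) + w p * (-(A i0 q : ℝ)) := by
      intro w
      have hterm : ∀ j, w j * d j
          = (if j = q then w j * (A i0 p : ℝ) else 0) + (if j = p then w j * (-(A i0 q : ℝ)) else 0) := by
        intro j
        by_cases h1 : j = q <;> by_cases h2 : j = p
        · exfalso; apply hq; rw [← h1, h2]
        · simp [hd, h1, h2, hq, Ne.symm hq]
        · simp [hd, h1, h2, hq, Ne.symm hq]
        · simp [hd, h1, h2, hq, Ne.symm hq]
      rw [Finset.sum_congr rfl fun j _ => hterm j, Finset.sum_add_distrib]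
      simp [Finset.sum_ite_eq']
    have hdi : ∀ i, ∑ j, (A i j : ℝ) * d j = 0 := by
      intro i
      rw [hsum (fun j => (A i j : ℝ))]
      have h' : ((A i0 p * A i q - A i0 q * A i p : ℤ) : ℝ) = 0 := by rw [hcon i p q]; simp
      push_cast at h'
      linarith
    have hline : ∀ t : ℝ, (fun j => x₀ j + t * d j) ∈ L := by
      intro t
      rw [hL]
      intro i
      have hx := hx₀; rw [hL] at hx
      have hexp : ∑ j, (A i j : ℝ) * (x₀ j + t * d j)
          = ∑ j, (A i j : ℝ) * x₀ j + t * ∑ j, (A i j : ℝ) * d j := by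
        rw [Finset.mul_sum, ← Finset.sum_add_distrib]
        exact Finset.sum_congr rfl fun j _ => by ring
      rw [hexp, hdi i]
      simpa using hx i
    have hdq : d q = (A i0 p : ℝ) := by simp [hd]
    have hdne : d ≠ 0 := by
      intro h
      have : d q = 0 := by rw [h]; rfl
      rw [hdq] at this
      exact (Int.cast_ne_zero.mpr hp) this
    have hdnorm : 0 < ‖d‖ := norm_pos_iff.mpr hdne
    set t : ℝ := (|C0| + ‖x₀‖ + 1) / ‖d‖ with ht
    have ht0 : 0 ≤ t := by positivity
    have hmem := hline t
    have heq : (fun j => x₀ j + t * d j) = x₀ + t • d := by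
      funext j; simp [Pi.add_apply, Pi.smul_apply, smul_eq_mul]
    rw [heq] at hmem
    have h1 : ‖x₀ + t • d‖ ≤ C0 := hC0 _ hmem
    have h2 : ‖t • d‖ ≤ ‖x₀ + t • d‖ + ‖x₀‖ := by
      have h3 := norm_sub_le (x₀ + t • d) x₀
      have h4 : x₀ + t • d - x₀ = t • d := by abel
      rw [h4] at h3
      exact h3
    have h5 : ‖t • d‖ = t * ‖d‖ := by
      rw [norm_smul, Real.norm_eq_abs, abs_of_nonneg ht0]
    have h6 : t * ‖d‖ = |C0| + ‖x₀‖ + 1 := div_mul_cancel₀ _ (ne_of_gt hdnorm)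
    have := le_abs_self C0
    have := norm_nonneg x₀
    linarith
  obtain ⟨k, j₁, j₂, hminor⟩ := hex
  have hk : k ≠ i0 := by rintro rfl; exact hminor (by ring)
  -- bound on the k-th row functional over L
  set C1 : ℝ := max C0 0 with hC1
  have hxb : ∀ x ∈ L, ∀ j, |x j| ≤ C1 := by
    intro x hx j
    have h1 : |x j| ≤ ‖x‖ := by simpa using norm_le_pi_norm x j
    exact h1.trans ((hC0 x hx).trans (le_max_left _ _))
  set Γr : ℝ := ∑ j, |(A k j : ℝ)| * C1 with hΓr
  have hΓrL : ∀ x ∈ L, |∑ j, (A k j : ℝ) * x j| ≤ Γr := by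
    intro x hx
    calc |∑ j, (A k j : ℝ) * x j| ≤ ∑ j, |(A k j : ℝ) * x j| := Finset.abs_sum_le_sum_abs _ _
    _ ≤ Γr := Finset.sum_le_sum fun j _ => by
        rw [abs_mul]
        exact mul_le_mul_of_nonneg_left (hxb x hx j) (abs_nonneg _)
  set Γ : ℤ := ⌈Γr⌉ with hΓdef
  have hΓL : ∀ x ∈ L, |∑ j, (A k j : ℝ) * x j| ≤ (Γ : ℝ) :=
    fun x hx => (hΓrL x hx).trans (Int.le_ceil _)
  set G : ℤ := |A i0 j₁ * A k j₂ - A i0 j₂ * A k j₁| with hGdef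
  have hGpos : 0 < G := abs_pos.mpr hminor
  set M : ℤ := |Γ| + |b k| + G + 1 with hMdef
  have hM0 : 0 < M := by
    have := abs_nonneg Γ
    have := abs_nonneg (b k)
    linarith
  set v : Fin m → ℤ := fun j => M * A i0 j - A k j with hv
  set lower : ℤ := M * b i0 + Γ with hlowerdef
  set bq : ℤ := (lower + G - 1) / G with hbq
  set b'' : ℤ := G * bq with hb''def
  have hdm := Int.mul_ediv_add_emod (lower + G - 1) G
  have hr1 : 0 ≤ (lower + G - 1) % G := Int.emod_nonneg _ (ne_of_gt hGpos)
  have hr2 : (lower + G - 1) % G < G := Int.emod_lt_of_pos _ hGpos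
  have hlow : lower ≤ b'' := by
    have : G * bq = lower + G - 1 - (lower + G - 1) % G := by rw [hb''def] at *; linarith [hdm]
    rw [hb''def]; linarith
  have hupp : b'' < M * (b i0 + 1) - b k := by
    have h1 : b'' ≤ lower + G - 1 := by rw [hb''def]; linarith [hdm]
    have h2 : Γ ≤ |Γ| := le_abs_self Γ
    have h3 : b k ≤ |b k| := le_abs_self (b k)
    rw [hlowerdef] at h1
    have : M * (b i0 + 1) = M * b i0 + M := by ring
    linarith
  set g' : ℤ := Finset.gcd Finset.univ v with hg'
  have hg'b : g' ∣ b'' := by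
    have h1 : g' ∣ v j₁ := Finset.gcd_dvd (Finset.mem_univ _)
    have h2 : g' ∣ v j₂ := Finset.gcd_dvd (Finset.mem_univ _)
    have h3 : g' ∣ (A i0 j₁ * A k j₂ - A i0 j₂ * A k j₁) := by
      have heq : A i0 j₁ * A k j₂ - A i0 j₂ * A k j₁ = A i0 j₂ * v j₁ - A i0 j₁ * v j₂ := by
        simp only [hv]; ring
      rw [heq]
      exact dvd_sub (Dvd.dvd.mul_left h1 _) (Dvd.dvd.mul_left h2 _)
    have h4 : g' ∣ G := (dvd_abs _ _).mpr h3
    exact Dvd.dvd.mul_right h4 bq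
  obtain ⟨y, hy⟩ := bezout_rep v b'' hg'b
  -- the replacement inequality is  v · x ≤ b''
  have hsub : ∀ x ∈ L, (∀ i, i ≠ i0 → ∑ j, (A i j : ℝ) * x j ≤ (b i : ℝ)) ∧
      ∑ j, (((v j : ℚ)) : ℝ) * x j ≤ (((b'' : ℤ) : ℚ) : ℝ) := by
    intro x hx
    have hxL := hx; rw [hL] at hxL
    refine ⟨fun i _ => hxL i, ?_⟩
    have hsum : ∑ j, (((v j : ℚ)) : ℝ) * x j
        = (M : ℝ) * (∑ j, (A i0 j : ℝ) * x j) - ∑ j, (A k j : ℝ) * x j := by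
      rw [Finset.mul_sum, ← Finset.sum_sub_distrib]
      refine Finset.sum_congr rfl fun j _ => ?_
      have hcast : (((v j : ℚ)) : ℝ) = (M : ℝ) * (A i0 j : ℝ) - (A k j : ℝ) := by
        simp only [hv]; push_cast; ring
      rw [hcast]; ring
    rw [hsum]
    have h1 : (M : ℝ) * (∑ j, (A i0 j : ℝ) * x j) ≤ (M : ℝ) * (b i0 : ℝ) := by
      apply mul_le_mul_of_nonneg_left (hxL i0)
      exact_mod_cast hM0.le
    have h2 := hΓL x hx
    have h3 : (lower : ℝ) ≤ (b'' : ℝ) := by exact_mod_cast hlow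
    have h4 : (lower : ℝ) = (M : ℝ) * (b i0 : ℝ) + (Γ : ℝ) := by
      rw [hlowerdef]; push_cast; ring
    have h5 : (((b'' : ℤ) : ℚ) : ℝ) = (b'' : ℝ) := by push_cast; ring
    rw [h5]
    have h6 := neg_abs_le (∑ j, (A k j : ℝ) * x j)
    linarith [abs_le.mp h2]
  refine ⟨fun j => (v j : ℚ), ((b'' : ℤ) : ℚ), _, rfl, fun x hx => hsub x hx, ?_, ⟨y, by
    have h := congrArg (fun t : ℤ => (t : ℚ)) hy
    push_cast at h
    simpa using h⟩⟩
  ext x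
  simp only [Set.mem_inter_iff, Set.mem_setOf_eq]
  constructor
  · rintro ⟨⟨h1, h2⟩, h3⟩
    refine ⟨?_, h3⟩
    choose z hz using h3
    rw [hL]
    intro i
    by_cases hi : i = i0
    swap
    · exact h1 i hi
    rw [hi]
    have hsx : ∀ w : Fin m → ℤ, ∑ j, (w j : ℝ) * x j = ((∑ j, w j * z j : ℤ) : ℝ) := by
      intro w
      push_cast
      exact Finset.sum_congr rfl fun j _ => by rw [hz j]
    by_contra hcon2
    push_neg at hcon2
    have hSz : b i0 + 1 ≤ ∑ j, A i0 j * z j := by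
      have hlt : (b i0 : ℝ) < ((∑ j, A i0 j * z j : ℤ) : ℝ) := by rw [← hsx]; exact hcon2
      have : b i0 < ∑ j, A i0 j * z j := by exact_mod_cast hlt
      linarith
    have hcz : ∑ j, A k j * z j ≤ b k := by
      have hk1 := h1 k hk
      rw [hsx (A k)] at hk1
      exact_mod_cast hk1
    have hvz : ∑ j, v j * z j ≤ b'' := by
      have h2' : ∑ j, ((v j : ℤ) : ℝ) * x j ≤ ((b'' : ℤ) : ℝ) := by
        have he : ∀ j, (((v j : ℚ)) : ℝ) = ((v j : ℤ) : ℝ) := fun j => by push_cast; ring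
        have he2 : (((b'' : ℤ) : ℚ) : ℝ) = ((b'' : ℤ) : ℝ) := by push_cast; ring
        calc ∑ j, ((v j : ℤ) : ℝ) * x j = ∑ j, (((v j : ℚ)) : ℝ) * x j :=
              Finset.sum_congr rfl fun j _ => by rw [he j]
        _ ≤ (((b'' : ℤ) : ℚ) : ℝ) := h2
        _ = ((b'' : ℤ) : ℝ) := he2
      rw [hsx v] at h2'
      exact_mod_cast h2'
    have hexp : ∑ j, v j * z j = M * (∑ j, A i0 j * z j) - ∑ j, A k j * z j := by
      rw [Finset.mul_sum, ← Finset.sum_sub_distrib]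
      exact Finset.sum_congr rfl fun j _ => by simp only [hv]; ring
    have hbig : M * (b i0 + 1) ≤ M * (∑ j, A i0 j * z j) :=
      mul_le_mul_of_nonneg_left hSz hM0.le
    rw [hexp] at hvz
    linarith
  · rintro ⟨h1, h3⟩
    exact ⟨hsub x h1, h3⟩
end

section
/- Let Qx ⊆ R^m be a full-dimensional convex set, H^1 a hyperplane with Q^1 := H^1 ∩ Qx nonempty, H ≠ H^1 a hyperplane supporting a nonempty face of Q^1, and H̄ the closed half-space bounded by H not containing Q^1. Suppose H* is a hyperplane separating int(Qx) from H̄ ∩ H^1 with H* ∩ H^1 = H ∩ H^1, making angle θ with H^1. Then for every x̄ ∈ H^1 ∩ H̄: d(x̄, Qx) ≥ d(x̄, H ∩ H^1) · sin θ. -/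
open RealInnerProductSpace

/-- **Lemma `OBS:dist`.** Let `Qx` be full-dimensional convex, `H^1` a
hyperplane meeting `Qx`, `H ≠ H^1` a hyperplane supporting a nonempty face of
`Q^1 = H^1 ∩ Qx` with `H̄` the closed half-space bounded by `H` not containing `Q^1`, and
let `H*` be a hyperplane separating `int(Qx)` from `H̄ ∩ H^1` with `H* ∩ H^1 = H ∩ H^1`,
making (dihedral) angle `θ ∈ (0, π/2]` with `H^1`. Then every `x̄ ∈ H^1 ∩ H̄` satisfies
`d(x̄, Qx) ≥ d(x̄, H ∩ H^1) · sin θ`. -/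
theorem stmt_14 {m : ℕ} (Qx : Set (EuclideanSpace ℝ (Fin m)))
    (hconv : Convex ℝ Qx) (hfull : (interior Qx).Nonempty)
    (u1 uh ustar : EuclideanSpace ℝ (Fin m)) (c1 ch cstar : ℝ)
    (hu1 : ‖u1‖ = 1) (huh : ‖uh‖ = 1) (hustar : ‖ustar‖ = 1)
    (H1 H Hstar : Set (EuclideanSpace ℝ (Fin m)))
    (hH1 : H1 = {x | ⟪u1, x⟫ = c1})
    (hH : H = {x | ⟪uh, x⟫ = ch})
    (hHstar : Hstar = {x | ⟪ustar, x⟫ = cstar})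
    (hQ1ne : (H1 ∩ Qx).Nonempty)
    (hHneH1 : H ≠ H1)
    -- `H` supports a nonempty face of `Q^1 = H^1 ∩ Qx`, with `H̄ = {⟪uh,·⟫ ≥ ch}`
    -- the half-space not containing `Q^1`:
    (hsupp : ∃ y ∈ H1 ∩ Qx, ⟪uh, y⟫ = ch)
    (hside : ∀ y ∈ H1 ∩ Qx, ⟪uh, y⟫ ≤ ch)
    -- `H* ∩ H^1 = H ∩ H^1`:
    (hinter : Hstar ∩ H1 = H ∩ H1)
    -- `H*` separates `int(Qx)` from `H̄ ∩ H^1`: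
    (hsep1 : ∀ y ∈ interior Qx, ⟪ustar, y⟫ ≤ cstar)
    (hsep2 : ∀ y ∈ H1, ch ≤ ⟪uh, y⟫ → cstar ≤ ⟪ustar, y⟫)
    -- the angle `θ` between `H*` and `H^1`:
    (θ : ℝ) (hθ0 : 0 < θ) (hθ1 : θ ≤ Real.pi / 2)
    (hcos : Real.cos θ = |⟪u1, ustar⟫|) :
    ∀ xb ∈ H1, ch ≤ ⟪uh, xb⟫ →
      Metric.infDist xb (H ∩ H1) * Real.sin θ ≤ Metric.infDist xb Qx := by
  intro xb hxb hxbH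
  set t := ⟪u1, ustar⟫ with ht
  have hpi : θ < Real.pi := lt_of_le_of_lt hθ1 (by linarith [Real.pi_pos])
  have hsin : 0 < Real.sin θ := Real.sin_pos_of_pos_of_lt_pi hθ0 hpi
  have hsq : Real.sin θ ^ 2 = 1 - t ^ 2 := by
    have h := Real.sin_sq_add_cos_sq θ
    rw [hcos] at h
    nlinarith [sq_abs t]
  have hD : 0 < 1 - t ^ 2 := by nlinarith
  have hs0 : cstar ≤ ⟪ustar, xb⟫ := hsep2 xb hxb hxbH
  set s := ⟪ustar, xb⟫ - cstar with hsdef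
  have hs : 0 ≤ s := by rw [hsdef]; linarith
  -- Qx lies in the halfspace ⟪ustar,·⟫ ≤ cstar
  have hQsub : ∀ q ∈ Qx, ⟪ustar, q⟫ ≤ cstar := by
    intro q hq
    obtain ⟨x0, hx0⟩ := hfull
    set C := ⟪ustar, x0 - q⟫ with hC
    have key : ∀ r : ℝ, r ∈ Set.Ioc (0:ℝ) 1 → ⟪ustar, q⟫ + r * C ≤ cstar := by
      intro r hr
      have hmem := hconv.add_smul_sub_mem_interior hq hx0 hr
      have := hsep1 _ hmem
      rwa [inner_add_right, real_inner_smul_right] at this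
    by_contra hcon
    push_neg at hcon
    set δ := ⟪ustar, q⟫ - cstar with hδ
    have hδ0 : 0 < δ := by rw [hδ]; linarith
    rcases le_or_gt 0 C with hC0 | hC0
    · have := key 1 ⟨one_pos, le_refl 1⟩
      nlinarith
    · set r := min 1 (δ / (-2 * C)) with hr
      have h3 : 0 < -2 * C := by linarith
      have hrpos : 0 < r := lt_min one_pos (div_pos hδ0 h3)
      have hr1 : r ≤ 1 := min_le_left _ _
      have := key r ⟨hrpos, hr1⟩
      have hrle : r ≤ δ / (-2 * C) := min_le_right _ _
      have h2 : r * (-2 * C) ≤ δ := (le_div_iff₀ h3).mp hrle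
      nlinarith
  have hQne : Qx.Nonempty := hfull.mono interior_subset
  -- s ≤ infDist xb Qx
  have hright : s ≤ Metric.infDist xb Qx := by
    rw [Metric.infDist_eq_iInf]
    have : Nonempty ↥Qx := hQne.to_subtype
    apply le_ciInf
    intro q
    have h1 : ⟪ustar, xb - (q : EuclideanSpace ℝ (Fin m))⟫ ≤ ‖xb - (q : EuclideanSpace ℝ (Fin m))‖ := by
      have := real_inner_le_norm ustar (xb - (q : EuclideanSpace ℝ (Fin m)))
      rwa [hustar, one_mul] at this
    have h2 : ⟪ustar, xb - (q : EuclideanSpace ℝ (Fin m))⟫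
        = ⟪ustar, xb⟫ - ⟪ustar, (q : EuclideanSpace ℝ (Fin m))⟫ := inner_sub_right _ _ _
    have h3 := hQsub q q.2
    rw [dist_eq_norm, hsdef]
    linarith
  -- the projection point p
  set b := s / (1 - t ^ 2) with hbdef
  set a := -t * b with hadef
  set p : EuclideanSpace ℝ (Fin m) := xb - a • u1 - b • ustar with hpdef
  have hiu1 : ⟪u1, u1⟫ = 1 := by
    rw [real_inner_self_eq_norm_sq, hu1]; norm_num
  have hius : ⟪ustar, ustar⟫ = 1 := by
    rw [real_inner_self_eq_norm_sq, hustar]; norm_num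
  have hts : ⟪ustar, u1⟫ = t := (real_inner_comm ustar u1).symm
  have hbD : b * (1 - t ^ 2) = s := by
    rw [hbdef]; field_simp
  have hpH1 : ⟪u1, p⟫ = c1 := by
    have hx1 : ⟪u1, xb⟫ = c1 := by rw [hH1] at hxb; exact hxb
    simp only [hpdef, inner_sub_right, real_inner_smul_right, hiu1, ← ht]
    rw [hx1, hadef]; ring
  have hpHs : ⟪ustar, p⟫ = cstar := by
    simp only [hpdef, inner_sub_right, real_inner_smul_right, hius, hts]
    have hab : a * t + b * 1 = s := by rw [hadef]; linear_combination hbD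
    rw [hsdef] at hab
    linarith
  have hpmem : p ∈ H ∩ H1 := by
    rw [← hinter]
    exact ⟨by rw [hHstar]; exact hpHs, by rw [hH1]; exact hpH1⟩
  -- distance to p
  have hxbp : xb - p = a • u1 + b • ustar := by
    rw [hpdef]; abel
  have hnormsq : ‖xb - p‖ ^ 2 = b ^ 2 * (1 - t ^ 2) := by
    rw [← real_inner_self_eq_norm_sq, hxbp]
    simp only [inner_add_left, inner_add_right, real_inner_smul_left, real_inner_smul_right,
      hiu1, hius, hts, ← ht]
    rw [hadef]; ring
  have hdsin : dist xb p * Real.sin θ ≤ s := by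
    have hdn : dist xb p = ‖xb - p‖ := dist_eq_norm _ _
    have hsq2 : (dist xb p * Real.sin θ) ^ 2 = s ^ 2 := by
      rw [hdn, mul_pow, hnormsq, hsq]
      have he : b ^ 2 * (1 - t ^ 2) * (1 - t ^ 2) = (b * (1 - t ^ 2)) ^ 2 := by ring
      rw [he, hbD]
    have h1 : 0 ≤ dist xb p * Real.sin θ := mul_nonneg dist_nonneg hsin.le
    calc dist xb p * Real.sin θ = Real.sqrt ((dist xb p * Real.sin θ) ^ 2) :=
          (Real.sqrt_sq h1).symm
      _ = Real.sqrt (s ^ 2) := by rw [hsq2]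
      _ = s := Real.sqrt_sq hs
      _ ≤ s := le_refl s
  have hleft : Metric.infDist xb (H ∩ H1) ≤ dist xb p :=
    Metric.infDist_le_dist_of_mem hpmem
  calc Metric.infDist xb (H ∩ H1) * Real.sin θ
      ≤ dist xb p * Real.sin θ := mul_le_mul_of_nonneg_right hleft hsin.le
    _ ≤ s := hdsin
    _ ≤ Metric.infDist xb Qx := hright
end

section
/- Let C̄ = [0,1]^t ⊂ R^t (t ≥ 2) with center v̄ = (1/2, …, 1/2). Let p^1 be a rational point in C̄ ∩ {x1 = 0} with at least one fractional coordinate, q^1 = 2v̄ − p^1, and for i = 2, …, t let p^i, q^i be the centers of the facets {x_i = 0} and {x_i = 1} of C̄. Let Q1 be any convex set containing the 2t points p^i, q^i (i = 1,…,t). Then for every split (π, π0) in R^t, the point v̄ belongs to Q1(π, π0). -/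
/-- Let `C̄ = [0,1]^t` (`t ≥ 2`) with center `v̄ = (1/2, …, 1/2)`. Let
`p¹` be a rational point of `C̄ ∩ {x₁ = 0}` with a fractional coordinate, `q¹ = 2v̄ − p¹`,
and `pⁱ, qⁱ` the centers of the facets `{xᵢ = 0}`, `{xᵢ = 1}` for `i ≠ 1`. If `Q1` is a
convex set containing these `2t` points, then `v̄ ∈ Q1(π, π0)` for every split `(π, π0)`. -/
theorem stmt_17 {t : ℕ} (ht : 2 ≤ t)
    (vbar : Fin t → ℝ) (hv : vbar = fun _ => 1 / 2)
    (p1 : Fin t → ℝ)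
    (hp1cube : ∀ i, 0 ≤ p1 i ∧ p1 i ≤ 1)
    (hp1zero : p1 ⟨0, by omega⟩ = 0)
    (hp1rat : ∀ i, ∃ r : ℚ, p1 i = (r : ℝ))
    (hp1frac : ∃ i, ∀ n : ℤ, p1 i ≠ (n : ℝ))
    (q1 : Fin t → ℝ) (hq1 : q1 = fun i => 1 - p1 i)
    (pp qq : Fin t → Fin t → ℝ)
    (hpp : ∀ i j, pp i j = if j = i then 0 else 1 / 2)
    (hqq : ∀ i j, qq i j = if j = i then 1 else 1 / 2)
    (Q1 : Set (Fin t → ℝ)) (hconv : Convex ℝ Q1)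
    (hmem1 : p1 ∈ Q1) (hmem2 : q1 ∈ Q1)
    (hmem : ∀ i : Fin t, i ≠ ⟨0, by omega⟩ → pp i ∈ Q1 ∧ qq i ∈ Q1)
    (π : Fin t → ℤ) (π0 : ℤ) :
    vbar ∈ convexHull ℝ ((Q1 ∩ {x | ∑ i, (π i : ℝ) * x i ≤ (π0 : ℝ)}) ∪
      (Q1 ∩ {x | (π0 : ℝ) + 1 ≤ ∑ i, (π i : ℝ) * x i})) := by
  set A := Q1 ∩ {x | ∑ i, (π i : ℝ) * x i ≤ (π0 : ℝ)} with hA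
  set B := Q1 ∩ {x | (π0 : ℝ) + 1 ≤ ∑ i, (π i : ℝ) * x i} with hB
  set N : ℤ := ∑ i, π i with hN
  have j1 : Fin t := ⟨1, by omega⟩
  have hj1 : (⟨1, by omega⟩ : Fin t) ≠ ⟨0, by omega⟩ := by
    intro h; exact absurd (congrArg Fin.val h) (by simp)
  -- midpoint lemma
  have hmid : ∀ a b : Fin t → ℝ, (∀ i, a i + b i = 1) →
      vbar = (1/2 : ℝ) • a + (1/2 : ℝ) • b := by
    intro a b hab
    funext i
    simp only [hv, Pi.add_apply, Pi.smul_apply, smul_eq_mul]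
    have := hab i; linarith
  have hmidmem : ∀ a b : Fin t → ℝ, (∀ i, a i + b i = 1) →
      a ∈ A ∪ B → b ∈ A ∪ B → vbar ∈ convexHull ℝ (A ∪ B) := by
    intro a b hab ha hb
    rw [hmid a b hab]
    exact (convex_convexHull ℝ (A ∪ B)) (subset_convexHull ℝ _ ha)
      (subset_convexHull ℝ _ hb) (by norm_num) (by norm_num) (by norm_num)
  -- sum over key points
  have key : ∀ (j : Fin t) (c : ℝ),
      (∑ i, (π i : ℝ) * (if i = j then c else 1/2)) = (N : ℝ)/2 + (π j : ℝ) * (c - 1/2) := by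
    intro j c
    have h1 : ∀ i, (π i : ℝ) * (if i = j then c else 1/2)
        = (π i : ℝ)/2 + (if i = j then (π i : ℝ)*(c - 1/2) else 0) := by
      intro i; split <;> ring
    simp_rw [h1, Finset.sum_add_distrib, Finset.sum_ite_eq' Finset.univ j]
    simp only [Finset.mem_univ, if_true, hN]
    push_cast
    rw [← Finset.sum_div]
  have hsv : (∑ i, (π i : ℝ) * vbar i) = (N : ℝ)/2 := by
    rw [hv]
    have := key ⟨0, by omega⟩ (1/2)
    simpa using this
  -- vbar ∈ Q1
  have hvQ : vbar ∈ Q1 := by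
    have h := hmem ⟨1, by omega⟩ hj1
    have : vbar = (1/2 : ℝ) • pp ⟨1, by omega⟩ + (1/2 : ℝ) • qq ⟨1, by omega⟩ := by
      apply hmid
      intro i; rw [hpp, hqq]; split <;> norm_num
    rw [this]
    exact hconv h.1 h.2 (by norm_num) (by norm_num) (by norm_num)
  by_cases hc1 : (N : ℝ)/2 ≤ (π0 : ℝ)
  · exact subset_convexHull ℝ _ (Or.inl ⟨hvQ, by rw [Set.mem_setOf_eq, hsv]; exact hc1⟩)
  by_cases hc2 : (π0 : ℝ) + 1 ≤ (N : ℝ)/2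
  · exact subset_convexHull ℝ _ (Or.inr ⟨hvQ, by rw [Set.mem_setOf_eq, hsv]; exact hc2⟩)
  push_neg at hc1 hc2
  have hNodd : N = 2 * π0 + 1 := by
    have h1 : (2 * π0 : ℝ) < (N : ℝ) := by linarith
    have h2 : (N : ℝ) < 2 * π0 + 2 := by linarith
    have h1' : 2 * π0 < N := by exact_mod_cast h1
    have h2' : N < 2 * π0 + 2 := by exact_mod_cast h2
    omega
  by_cases hcj : ∃ j : Fin t, j ≠ ⟨0, by omega⟩ ∧ π j ≠ 0
  · obtain ⟨j, hj0, hjne⟩ := hcj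
    obtain ⟨hpQ, hqQ⟩ := hmem j hj0
    have hsum1 : ∀ i, pp j i + qq j i = 1 := by
      intro i; rw [hpp, hqq]; split <;> norm_num
    have hsp : (∑ i, (π i : ℝ) * pp j i) = (N : ℝ)/2 - (π j : ℝ)/2 := by
      have h := key j 0
      calc (∑ i, (π i : ℝ) * pp j i)
          = ∑ i, (π i : ℝ) * (if i = j then (0:ℝ) else 1/2) :=
            Finset.sum_congr rfl (fun i _ => by rw [hpp])
        _ = (N : ℝ)/2 - (π j : ℝ)/2 := by rw [h]; ring
    have hsq : (∑ i, (π i : ℝ) * qq j i) = (N : ℝ)/2 + (π j : ℝ)/2 := by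
      have h := key j 1
      calc (∑ i, (π i : ℝ) * qq j i)
          = ∑ i, (π i : ℝ) * (if i = j then (1:ℝ) else 1/2) :=
            Finset.sum_congr rfl (fun i _ => by rw [hqq])
        _ = (N : ℝ)/2 + (π j : ℝ)/2 := by rw [h]; ring
    have hNhalf : (N : ℝ)/2 = (π0 : ℝ) + 1/2 := by
      rw [hNodd]; push_cast; ring
    rcases lt_or_gt_of_ne hjne with hneg | hpos
    · -- π j ≤ -1 : pp j ∈ B, qq j ∈ A
      have hple : (π j : ℝ) ≤ -1 := by exact_mod_cast (by omega : π j ≤ -1)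
      apply hmidmem (pp j) (qq j) hsum1
      · exact Or.inr ⟨hpQ, by rw [Set.mem_setOf_eq, hsp, hNhalf]; linarith⟩
      · exact Or.inl ⟨hqQ, by rw [Set.mem_setOf_eq, hsq, hNhalf]; linarith⟩
    · have hple : (1 : ℝ) ≤ (π j : ℝ) := by exact_mod_cast hpos
      apply hmidmem (pp j) (qq j) hsum1
      · exact Or.inl ⟨hpQ, by rw [Set.mem_setOf_eq, hsp, hNhalf]; linarith⟩
      · exact Or.inr ⟨hqQ, by rw [Set.mem_setOf_eq, hsq, hNhalf]; linarith⟩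
  · push_neg at hcj
    have hzero : ∀ j : Fin t, j ≠ ⟨0, by omega⟩ → π j = 0 := fun j h => hcj j h
    have hN0 : π ⟨0, by omega⟩ = N := by
      rw [hN]
      rw [Finset.sum_eq_single ⟨0, by omega⟩]
      · intro b _ hb; exact hzero b hb
      · intro h; exact absurd (Finset.mem_univ _) h
    have hsp1 : (∑ i, (π i : ℝ) * p1 i) = 0 := by
      apply Finset.sum_eq_zero
      intro i _
      by_cases h : i = ⟨0, by omega⟩
      · rw [h, hp1zero, mul_zero]
      · rw [hzero i h]; simp
    have hsq1 : (∑ i, (π i : ℝ) * q1 i) = (N : ℝ) := by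
      have : ∀ i, (π i : ℝ) * q1 i = (π i : ℝ) - (π i : ℝ) * p1 i := by
        intro i; rw [hq1]; ring
      simp_rw [this, Finset.sum_sub_distrib, hsp1, sub_zero, hN]
      push_cast; rfl
    have hsum1 : ∀ i, p1 i + q1 i = 1 := by intro i; rw [hq1]; ring
    have hr : (N : ℝ) = 2 * (π0 : ℝ) + 1 := by exact_mod_cast hNodd
    rcases le_or_gt (0 : ℤ) π0 with h0 | h0
    · have h0' : (0 : ℝ) ≤ (π0 : ℝ) := by exact_mod_cast h0
      apply hmidmem p1 q1 hsum1
      · exact Or.inl ⟨hmem1, by rw [Set.mem_setOf_eq, hsp1]; linarith⟩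
      · exact Or.inr ⟨hmem2, by rw [Set.mem_setOf_eq, hsq1]; linarith⟩
    · have h0' : (π0 : ℝ) ≤ -1 := by exact_mod_cast (by omega : π0 ≤ -1)
      apply hmidmem p1 q1 hsum1
      · exact Or.inr ⟨hmem1, by rw [Set.mem_setOf_eq, hsp1]; linarith⟩
      · exact Or.inl ⟨hmem2, by rw [Set.mem_setOf_eq, hsq1]; linarith⟩
end

section
/- Suppose nonnegative combinations of the rays r^1, …, r^k span R^m and L ⊂ R^m is a polytope containing f in its interior. Let L_B be the convex hull of the boundary points f + r^j/ψ_L(r^j), j = 1,…,k, where ψ_L is the gauge of L − f. Then f lies in the interior of L_B, L_B has rays going into its corners, and the L-cut coincides with the L_B-cut, i.e., ψ_L(r^j) = ψ_{L_B}(r^j) for all j. -/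
/-!
Translate so that `f = 0`; then `K := L - f` is a compact convex neighbourhood of `0`, the
boundary points become `p j = r j / γ_K (r j) ∈ K`, and `L_B - f = conv (p j)`. Since
`r j = γ_K (r j) • p j`, the `p j` still positively span, so every vector is a positive
multiple of a point of `conv (p j)`. A convex set with this property is absorbent, its gauge is
a finite convex function, hence continuous in finite dimension, and so the set is a
neighbourhood of `0`. Finally `conv (p j) ⊆ K` gives `γ_K ≤ γ_{conv (p j)}`, while
`p j ∈ conv (p j)` gives the reverse inequality at `r j`.
-/

open Set Filter Topology Pointwise Bornology

variable {E : Type*}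

def PositivelySpans {ι : Type*} [Fintype ι] [AddCommMonoid E] [Module ℝ E] (p : ι → E) : Prop :=
  ∀ x, ∃ c : ι → ℝ, (∀ j, 0 ≤ c j) ∧ x = ∑ j, c j • p j

section Algebraic

variable [AddCommGroup E] [Module ℝ E]

section PositivelySpans

variable {ι : Type*} [Fintype ι] {p : ι → E}

lemma PositivelySpans.of_eq_smul {r : ι → E} {a : ι → ℝ} (hr : PositivelySpans r)
    (ha : ∀ j, 0 ≤ a j) (hra : ∀ j, r j = a j • p j) : PositivelySpans p := by
  intro x
  obtain ⟨c, hc, rfl⟩ := hr x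
  exact ⟨fun j => c j * a j, fun j => mul_nonneg (hc j) (ha j), by simp_rw [hra, smul_smul]⟩

lemma PositivelySpans.exists_sum_pos [Nonempty ι] (hp : PositivelySpans p) (x : E) :
    ∃ c : ι → ℝ, (∀ j, 0 ≤ c j) ∧ 0 < ∑ j, c j ∧ x = ∑ j, c j • p j := by
  classical
  -- adding a representation of `-p j₀` and then `p j₀` itself makes the total weight positive
  let j₀ := Classical.arbitrary ι
  obtain ⟨c, hc, hx⟩ := hp x
  obtain ⟨d, hd, hneg⟩ := hp (-p j₀)
  refine ⟨c + d + Pi.single j₀ 1, fun j => ?_, ?_, ?_⟩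
  · exact add_nonneg (add_nonneg (hc j) (hd j))
      ((Pi.single_nonneg.2 zero_le_one : (0 : ι → ℝ) ≤ Pi.single j₀ 1) j)
  · have hc' := Finset.sum_nonneg fun j (_ : j ∈ Finset.univ) => hc j
    have hd' := Finset.sum_nonneg fun j (_ : j ∈ Finset.univ) => hd j
    simp only [Pi.add_apply, Finset.sum_add_distrib, Finset.sum_pi_single', Finset.mem_univ,
      if_true]
    linarith
  · simp only [Pi.add_apply, add_smul, Finset.sum_add_distrib, ← hx, ← hneg]
    simp

lemma PositivelySpans.exists_pos_smul_mem_convexHull [Nonempty ι] (hp : PositivelySpans p)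
    (x : E) : ∃ t : ℝ, 0 < t ∧ t • x ∈ convexHull ℝ (range p) := by
  obtain ⟨c, hc, hpos, rfl⟩ := hp.exists_sum_pos x
  exact ⟨(∑ j, c j)⁻¹, inv_pos.2 hpos,
    Finset.centerMass_mem_convexHull _ (fun j _ => hc j) hpos fun j _ => mem_range_self j⟩

end PositivelySpans

variable {s : Set E}

lemma Convex.absorbent_of_forall_exists_smul_mem (hs : Convex ℝ s)
    (h : ∀ x, ∃ t : ℝ, 0 < t ∧ t • x ∈ s) : Absorbent ℝ s := by
  have h0 : (0 : E) ∈ s := (h 0).elim fun _ ht => by simpa using ht.2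
  have seg : ∀ {y : E} {t a : ℝ}, 0 < t → t • y ∈ s → 0 ≤ a → a ≤ t → a • y ∈ s := by
    intro y t a ht hy ha hat
    have := hs.smul_mem_of_zero_mem h0 hy ⟨div_nonneg ha ht.le, (div_le_one ht).2 hat⟩
    rwa [smul_smul, div_mul_cancel₀ _ ht.ne'] at this
  intro x
  obtain ⟨t, ht, htx⟩ := h x
  obtain ⟨u, hu, hux⟩ := h (-x)
  refine absorbs_iff_norm.2 ⟨max t⁻¹ u⁻¹, fun c hc => singleton_subset_iff.2 ?_⟩
  have hc0 : c ≠ 0 := by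
    rintro rfl
    simp only [norm_zero] at hc
    linarith [le_max_left t⁻¹ u⁻¹, inv_pos.2 ht]
  rw [mem_smul_set_iff_inv_smul_mem₀ hc0]
  rcases hc0.lt_or_gt with hneg | hpos
  · rw [Real.norm_of_nonpos hneg.le, max_le_iff] at hc
    rw [← neg_smul_neg]
    refine seg (a := -c⁻¹) hu hux (by simpa using hneg.le) ?_
    rw [← inv_neg]
    exact inv_le_of_inv_le₀ hu hc.2
  · rw [Real.norm_of_nonneg hpos.le, max_le_iff] at hc
    exact seg ht htx (inv_nonneg.2 hpos.le) (inv_le_of_inv_le₀ ht hc.1)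

lemma convexOn_gauge (hs : Convex ℝ s) (ha : Absorbent ℝ s) : ConvexOn ℝ univ (gauge s) :=
  ⟨convex_univ, fun x _ y _ a b ha' hb' _ => by
    simpa only [gauge_smul_of_nonneg ha', gauge_smul_of_nonneg hb', smul_eq_mul]
      using gauge_add_le hs ha (a • x) (b • y)⟩

end Algebraic

section Normed

variable [NormedAddCommGroup E] [NormedSpace ℝ E] {s t : Set E}

lemma Convex.mem_nhds_zero_of_absorbent [FiniteDimensional ℝ E] (hs : Convex ℝ s)
    (ha : Absorbent ℝ s) : s ∈ 𝓝 0 := by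
  have hcont : Continuous (gauge s) :=
    continuousOn_univ.1 ((convexOn_gauge hs ha).continuousOn isOpen_univ)
  refine mem_of_superset ((isOpen_lt hcont continuous_const).mem_nhds ?_)
    (setOfPred_gauge_lt_one_subset_self hs ha.zero_mem ha)
  simp [gauge_zero]

lemma PositivelySpans.convexHull_mem_nhds_zero [FiniteDimensional ℝ E] {ι : Type*} [Fintype ι]
    [Nonempty ι] {p : ι → E} (hp : PositivelySpans p) : convexHull ℝ (range p) ∈ 𝓝 0 :=
  (convex_convexHull ℝ _).mem_nhds_zero_of_absorbent <|
    (convex_convexHull ℝ _).absorbent_of_forall_exists_smul_mem hp.exists_pos_smul_mem_convexHull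

lemma gauge_smul_inv_gauge_smul (ha : Absorbent ℝ s) (hb : IsVonNBounded ℝ s) (x : E) :
    gauge s x • (gauge s x)⁻¹ • x = x := by
  rcases eq_or_ne x 0 with rfl | hx
  · simp
  · exact smul_inv_smul₀ ((gauge_pos ha hb).2 hx).ne' x

lemma inv_gauge_smul_mem (hc : Convex ℝ s) (hcl : IsClosed s) (hs : s ∈ 𝓝 0) (x : E) :
    (gauge s x)⁻¹ • x ∈ s := by
  rw [← hcl.closure_eq, ← gauge_le_one_iff_mem_closure hc hs,
    gauge_smul_of_nonneg (inv_nonneg.2 (gauge_nonneg x)), smul_eq_mul]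
  rcases eq_or_ne (gauge s x) 0 with h | h <;> simp [h]

lemma gauge_eq_of_subset_of_inv_gauge_smul_mem (hs : Absorbent ℝ s) (hst : s ⊆ t)
    (ht : Absorbent ℝ t) (htb : IsVonNBounded ℝ t) {x : E} (hx : (gauge t x)⁻¹ • x ∈ s) :
    gauge s x = gauge t x := by
  refine le_antisymm ?_ (gauge_mono hs hst x)
  conv_lhs => rw [← gauge_smul_inv_gauge_smul ht htb x]
  exact gauge_le_of_mem (gauge_nonneg x) (smul_mem_smul_set hx)

variable {ι : Type*} {K : Set E}

lemma PositivelySpans.convexHull_inv_gauge_smul_mem_nhds_zero [FiniteDimensional ℝ E]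
    [Fintype ι] [Nonempty ι] (hK : IsCompact K) (hK0 : K ∈ 𝓝 0) {r : ι → E}
    (hr : PositivelySpans r) : convexHull ℝ (range fun j => (gauge K (r j))⁻¹ • r j) ∈ 𝓝 0 :=
  PositivelySpans.convexHull_mem_nhds_zero <| hr.of_eq_smul (fun _ => gauge_nonneg _) fun j =>
    (gauge_smul_inv_gauge_smul (absorbent_nhds_zero hK0)
      (NormedSpace.isVonNBounded_of_isBounded ℝ hK.isBounded) (r j)).symm

lemma gauge_convexHull_inv_gauge_smul (hKc : Convex ℝ K) (hK : IsCompact K) (hK0 : K ∈ 𝓝 0)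
    {r : ι → E} (hC : convexHull ℝ (range fun j => (gauge K (r j))⁻¹ • r j) ∈ 𝓝 0) (j : ι) :
    gauge (convexHull ℝ (range fun j => (gauge K (r j))⁻¹ • r j)) (r j) = gauge K (r j) :=
  gauge_eq_of_subset_of_inv_gauge_smul_mem (absorbent_nhds_zero hC)
    (convexHull_min (range_subset_iff.2 fun i => inv_gauge_smul_mem hKc hK.isClosed hK0 (r i)) hKc)
    (absorbent_nhds_zero hK0) (NormedSpace.isVonNBounded_of_isBounded ℝ hK.isBounded)
    (subset_convexHull ℝ _ (mem_range_self j))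

end Normed

lemma image_sub_const_eq_neg_vadd [AddCommGroup E] (f : E) (S : Set E) :
    (fun x => x - f) '' S = -f +ᵥ S := by
  simp only [← Set.image_vadd, vadd_eq_add, neg_add_eq_sub]

lemma image_sub_const_mem_nhds_zero_iff [AddCommGroup E] [TopologicalSpace E]
    [IsTopologicalAddGroup E] (f : E) (S : Set E) :
    (fun x => x - f) '' S ∈ 𝓝 0 ↔ f ∈ interior S := by
  rw [image_sub_const_eq_neg_vadd, ← mem_interior_iff_mem_nhds, interior_vadd,
    mem_vadd_set_iff_neg_vadd_mem, vadd_eq_add, neg_neg, add_zero]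

theorem stmt_19_general {m k : ℕ} (hk : 1 ≤ k)
    (L : Set (Fin m → ℝ)) (V : Finset (Fin m → ℝ))
    (hL : L = convexHull ℝ (V : Set _))
    (f : Fin m → ℝ) (hf : f ∈ interior L)
    (r : Fin k → Fin m → ℝ)
    (hspan : ∀ x : Fin m → ℝ, ∃ s : Fin k → ℝ, (∀ j, 0 ≤ s j) ∧ x = ∑ j, s j • r j)
    (ψ : (Fin m → ℝ) → ℝ) (hψ : ψ = gauge ((fun x => x - f) '' L))
    (bpt : Fin k → Fin m → ℝ) (hbpt : ∀ j, bpt j = f + (ψ (r j))⁻¹ • r j)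
    (LB : Set (Fin m → ℝ)) (hLB : LB = convexHull ℝ (Set.range bpt)) :
    f ∈ interior LB ∧
    (∀ v ∈ Set.extremePoints ℝ LB, ∃ j, v = bpt j) ∧
    (∀ j, ψ (r j) = gauge ((fun x => x - f) '' LB) (r j)) := by
  have : Nonempty (Fin k) := ⟨⟨0, hk⟩⟩
  obtain rfl : bpt = fun j => f + (ψ (r j))⁻¹ • r j := funext hbpt
  subst hL hψ hLB
  set K := (fun x => x - f) '' convexHull ℝ (V : Set (Fin m → ℝ)) with hK
  have hKc : Convex ℝ K := by
    rw [hK, image_sub_const_eq_neg_vadd]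
    exact (convex_convexHull ℝ _).vadd _
  have hKcpt : IsCompact K :=
    (V.finite_toSet.isCompact_convexHull (𝕜 := ℝ)).image (continuous_sub_right f)
  have hK0 : K ∈ 𝓝 0 := (image_sub_const_mem_nhds_zero_iff f _).2 hf
  have hLB : (fun x => x - f) '' convexHull ℝ (range fun j => f + (gauge K (r j))⁻¹ • r j) =
      convexHull ℝ (range fun j => (gauge K (r j))⁻¹ • r j) := by
    rw [image_sub_const_eq_neg_vadd, ← convexHull_vadd, vadd_set_range]
    simp
  have hC0 := PositivelySpans.convexHull_inv_gauge_smul_mem_nhds_zero hKcpt hK0 hspan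
  refine ⟨(image_sub_const_mem_nhds_zero_iff f _).1 (hLB ▸ hC0), fun v hv => ?_, fun j => ?_⟩
  · obtain ⟨j, rfl⟩ := extremePoints_convexHull_subset hv
    exact ⟨j, rfl⟩
  · rw [hLB, gauge_convexHull_inv_gauge_smul hKc hKcpt hK0 hC0]

/-- If nonnegative combinations of the rays `r¹, …, r^k` span `ℝ^m`
and `L` is a polytope with `f` in its interior, then `f` lies in the interior of
`L_B = conv{f + r^j/ψ_L(r^j)}`, every vertex of `L_B` is one of these boundary points
(i.e. `L_B` has rays going into its corners), and the gauges of `L − f` and `L_B − f`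
agree on every ray, so the `L`-cut and `L_B`-cut coincide. -/
theorem stmt_19 {m k : ℕ} (hk : 1 ≤ k)
    (L : Set (Fin m → ℝ)) (V : Finset (Fin m → ℝ))
    (hL : L = convexHull ℝ (V : Set _))
    (f : Fin m → ℝ) (hf : f ∈ interior L)
    (r : Fin k → Fin m → ℝ) (hrne : ∀ j, r j ≠ 0)
    (hspan : ∀ x : Fin m → ℝ, ∃ s : Fin k → ℝ, (∀ j, 0 ≤ s j) ∧ x = ∑ j, s j • r j)
    (ψ : (Fin m → ℝ) → ℝ) (hψ : ψ = gauge ((fun x => x - f) '' L))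
    (bpt : Fin k → Fin m → ℝ) (hbpt : ∀ j, bpt j = f + (ψ (r j))⁻¹ • r j)
    (LB : Set (Fin m → ℝ)) (hLB : LB = convexHull ℝ (Set.range bpt)) :
    f ∈ interior LB ∧
    (∀ v ∈ Set.extremePoints ℝ LB, ∃ j, v = bpt j) ∧
    (∀ j, ψ (r j) = gauge ((fun x => x - f) '' LB) (r j)) :=
  stmt_19_general hk L V hL f hf r hspan ψ hψ bpt hbpt LB hLB
end
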